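/- Let X be a closed random set with cl_p dec(A) = L^p(X) for a nonempty A ⊆ L^p(Ω;E). Then the strong-L^0 closure of dec(A) equals L^0(X): cl_0 dec(A) = L^0(X). Consequently chd_p(A) = chd_0(A) ∩ L^p(Ω;E). -/

import Mathlib

open MeasureTheory
open scoped ENNReal

/-- `A ⊆ L^p(Ω;E)` is decomposable: together with `f` and `g` it contains (the class of)
`1_B f + 1_{B^c} g` for every measurable `B`. -/
def IsDecomposable {Ω : Type*} {mΩ : MeasurableSpace Ω} {μ : Measure Ω} {E : Type*}
    [NormedAddCommGroup E] {p : ℝ≥0∞} (A : Set (Lp E p μ)) : Prop :=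
  ∀ f ∈ A, ∀ g ∈ A, ∀ B : Set Ω, MeasurableSet B →
    ∀ h : Lp E p μ, (h : Ω → E) =ᵐ[μ] (B.indicator f + Bᶜ.indicator g) → h ∈ A

/-- The decomposable hull of `A`: the smallest decomposable subset of `L^p(Ω;E)`
containing `A`. -/
def decHull {Ω : Type*} {mΩ : MeasurableSpace Ω} {μ : Measure Ω} {E : Type*}
    [NormedAddCommGroup E] {p : ℝ≥0∞} (A : Set (Lp E p μ)) : Set (Lp E p μ) :=
  ⋂₀ {C : Set (Lp E p μ) | A ⊆ C ∧ IsDecomposable C}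

/-- The set of `L^p` selections of a multifunction `X : Ω → 𝒫(E)`. -/
def SelLp {Ω : Type*} {mΩ : MeasurableSpace Ω} (μ : Measure Ω) {E : Type*}
    [NormedAddCommGroup E] (p : ℝ≥0∞) (X : Ω → Set E) : Set (Lp E p μ) :=
  {f : Lp E p μ | ∀ᵐ ω ∂μ, f ω ∈ X ω}

/-- Effros measurability of a multifunction. -/
def EffrosMeasurable {Ω : Type*} (mΩ : MeasurableSpace Ω) {E : Type*} [TopologicalSpace E]
    (X : Ω → Set E) : Prop :=
  ∀ U : Set E, IsOpen U → MeasurableSet {ω | (X ω ∩ U).Nonempty}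

/-- `Y ∈ L^p(Ω;E)` is the barycenter of the transition probability kernel `K`. -/
def IsKernelBarycenter {Ω : Type*} {mΩ : MeasurableSpace Ω} (μ : Measure Ω) {E : Type*}
    [NormedAddCommGroup E] [NormedSpace ℝ E] [MeasurableSpace E] {p : ℝ≥0∞}
    (K : ProbabilityTheory.Kernel Ω E) (Y : Lp E p μ) : Prop :=
  ∀ L : E →L[ℝ] ℝ, (fun ω => L (Y ω)) =ᵐ[μ] (fun ω => ∫ x, L x ∂(K ω))

/-- A kernel is Dirac-valued (a.s.) if almost every `K ω` is a Dirac measure. -/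
def DiracValued {Ω : Type*} {mΩ : MeasurableSpace Ω} (μ : Measure Ω) {E : Type*}
    [MeasurableSpace E] (K : ProbabilityTheory.Kernel Ω E) : Prop :=
  ∀ᵐ ω ∂μ, ∃ x : E, K ω = MeasureTheory.Measure.dirac x

/-- A kernel is supported (a.s.) on the multifunction `F`. -/
def KernelSupportedOn {Ω : Type*} {mΩ : MeasurableSpace Ω} (μ : Measure Ω) {E : Type*}
    [MeasurableSpace E] (K : ProbabilityTheory.Kernel Ω E) (F : Ω → Set E) : Prop :=
  ∀ᵐ ω ∂μ, K ω (F ω) = 1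

/-- `A ⊆ L^p(Ω;E)` is `p`-Choquet decomposable: it contains the barycenter of every
Dirac-valued transition probability kernel supported a.s. on the closed random set `F_A`
determined by `cl_p (dec A) = L^p(F_A)`, whose barycenter lies in `L^p`. -/
def PChoquetDecomposable {Ω : Type*} {mΩ : MeasurableSpace Ω} (μ : Measure Ω) {E : Type*}
    [NormedAddCommGroup E] [NormedSpace ℝ E] [MeasurableSpace E] [BorelSpace E]
    (p : ℝ≥0∞) [Fact (1 ≤ p)] (A : Set (Lp E p μ)) : Prop :=
  ∀ F : Ω → Set E, (∀ᵐ ω ∂μ, IsClosed (F ω)) →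
    SelLp μ p F = closure (decHull A) →
    ∀ K : ProbabilityTheory.Kernel Ω E, ProbabilityTheory.IsMarkovKernel K →
      DiracValued μ K → KernelSupportedOn μ K F →
      ∀ Y : Lp E p μ, IsKernelBarycenter μ K Y → Y ∈ A

/-- The closure of a set of `L^p` functions in `L^0`, i.e. with respect to convergence in
probability (in measure), viewed inside the space of a.e.-equivalence classes. -/
def cl0 {Ω : Type*} {mΩ : MeasurableSpace Ω} (μ : Measure Ω) {E : Type*}
    [NormedAddCommGroup E] {p : ℝ≥0∞} (S : Set (Lp E p μ)) : Set (Ω →ₘ[μ] E) :=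
  {g : Ω →ₘ[μ] E | ∃ f : ℕ → Lp E p μ, (∀ n, f n ∈ S) ∧
    TendstoInMeasure μ (fun n => ⇑(f n)) Filter.atTop ⇑g}

/-- The set of `L^0` selections of the multifunction `X`. -/
def Sel0 {Ω : Type*} {mΩ : MeasurableSpace Ω} (μ : Measure Ω) {E : Type*}
    [NormedAddCommGroup E] (X : Ω → Set E) : Set (Ω →ₘ[μ] E) :=
  {g : Ω →ₘ[μ] E | ∀ᵐ ω ∂μ, g ω ∈ X ω}

/-!
Limits in measure of selections of an a.s. closed `X` are selections, since convergence in
measure yields an a.s. convergent subsequence. Conversely, a selection `g ∈ L⁰(X)` is the limit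
in measure of the `L^p(X)`-selections obtained by replacing `g` with a fixed `f₀ ∈ L^p(X)` on
`{‖g‖ > n}`; these lie in `cl_p (dec A)`, and approximating them in `L^p` by elements of
`dec A` keeps convergence in measure.
-/

open Filter Topology

theorem MeasureTheory.TendstoInMeasure.of_tendstoInMeasure_sub_zero {Ω ι : Type*}
    {mΩ : MeasurableSpace Ω} {μ : Measure Ω} {E : Type*} [SeminormedAddCommGroup E]
    {l : Filter ι} {f g : ι → Ω → E} {h : Ω → E} (hg : TendstoInMeasure μ g l h)
    (hfg : TendstoInMeasure μ (f - g) l 0) : TendstoInMeasure μ f l h := by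
  rw [tendstoInMeasure_iff_norm] at *
  intro ε hε
  have hcover : ∀ i, {x | ε ≤ ‖f i x - h x‖} ⊆
      {x | ε / 2 ≤ ‖(f - g) i x - (0 : Ω → E) x‖} ∪ {x | ε / 2 ≤ ‖g i x - h x‖} := by
    intro i x hx
    by_contra hnot
    simp only [Set.mem_union, Set.mem_ofPred_eq, not_or, not_le, Pi.sub_apply, Pi.zero_apply,
      sub_zero] at hx hnot
    have := norm_sub_le_norm_sub_add_norm_sub (f i x) (g i x) (h x)
    linarith
  refine tendsto_of_tendsto_of_tendsto_of_le_of_le tendsto_const_nhds ?_ (fun _ => zero_le)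
    (fun i => (measure_mono (hcover i)).trans (measure_union_le _ _))
  simpa using (hfg (ε / 2) (half_pos hε)).add (hg (ε / 2) (half_pos hε))

section

variable {Ω : Type*} {mΩ : MeasurableSpace Ω} {μ : Measure Ω} {E : Type*}
  [NormedAddCommGroup E] {p : ℝ≥0∞}

theorem subset_decHull (A : Set (Lp E p μ)) : A ⊆ decHull A :=
  fun _ hx => Set.mem_sInter.2 fun _ hC => hC.1 hx

theorem cl0_subset_Sel0 {S : Set (Lp E p μ)} {X : Ω → Set E} (hS : S ⊆ SelLp μ p X)
    (hX : ∀ᵐ ω ∂μ, IsClosed (X ω)) : cl0 μ S ⊆ Sel0 μ X := by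
  rintro g ⟨f, hfS, hfg⟩
  obtain ⟨ns, -, hae⟩ := hfg.exists_seq_tendsto_ae
  have hmem : ∀ᵐ ω ∂μ, ∀ i, f (ns i) ω ∈ X ω := ae_all_iff.2 fun i => hS (hfS (ns i))
  filter_upwards [hae, hmem, hX] with ω hlim hmemω hclosed
  exact hclosed.mem_of_tendsto hlim (Eventually.of_forall hmemω)

theorem exists_seq_Lp_tendstoInMeasure_of_ae_eq_or [IsFiniteMeasure μ] (g : Ω →ₘ[μ] E)
    (f₀ : Lp E p μ) : ∃ G : ℕ → Lp E p μ, (∀ n, ∀ᵐ ω ∂μ, G n ω = g ω ∨ G n ω = f₀ ω) ∧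
      TendstoInMeasure μ (fun n => ⇑(G n)) atTop g := by
  classical
  set B : ℕ → Set Ω := fun n => {ω | ‖g ω‖ ≤ n}
  have hB : ∀ n, MeasurableSet (B n) := fun n =>
    measurableSet_le g.stronglyMeasurable.norm.measurable measurable_const
  have hmemLp : ∀ n, MemLp ((B n).piecewise g f₀) p μ := fun n =>
    MemLp.piecewise (hB n)
      (MemLp.of_bound g.aestronglyMeasurable.restrict n ((ae_restrict_iff' (hB n)).2
        (Eventually.of_forall fun _ hω => hω)))
      ((Lp.memLp f₀).restrict _)
  refine ⟨fun n => (hmemLp n).toLp _, fun n => ?_, ?_⟩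
  · filter_upwards [(hmemLp n).coeFn_toLp] with ω hω
    rw [hω]
    by_cases hωB : ω ∈ B n
    · exact Or.inl (Set.piecewise_eq_of_mem _ _ _ hωB)
    · exact Or.inr (Set.piecewise_eq_of_notMem _ _ _ hωB)
  · have hlim : ∀ ω, Tendsto (fun n => (B n).piecewise g f₀ ω) atTop (𝓝 (g ω)) := fun ω =>
      tendsto_const_nhds.congr' <| (eventually_ge_atTop ⌈‖g ω‖⌉₊).mono fun n hn =>
        (Set.piecewise_eq_of_mem (B n) g f₀ ((Nat.le_ceil _).trans (Nat.cast_le.2 hn))).symm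
    exact (tendstoInMeasure_of_tendsto_ae (fun n => (hmemLp n).aestronglyMeasurable)
      (Eventually.of_forall hlim)).congr_left fun n => (hmemLp n).coeFn_toLp.symm

theorem Sel0_subset_cl0_SelLp [IsFiniteMeasure μ] {X : Ω → Set E}
    (hX : (SelLp μ p X).Nonempty) : Sel0 μ X ⊆ cl0 μ (SelLp μ p X) := by
  obtain ⟨f₀, hf₀⟩ := hX
  intro g hg
  obtain ⟨G, hG, hGg⟩ := exists_seq_Lp_tendstoInMeasure_of_ae_eq_or g f₀
  refine ⟨G, fun n => ?_, hGg⟩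
  show ∀ᵐ ω ∂μ, G n ω ∈ X ω
  filter_upwards [hG n, hg, hf₀] with ω hGω hgω hf₀ω
  rcases hGω with h | h <;> rw [h] <;> assumption

theorem coe_image_SelLp (X : Ω → Set E) :
    (fun h : Lp E p μ => (h : Ω →ₘ[μ] E)) '' SelLp μ p X = Sel0 μ X ∩ {g | MemLp g p μ} := by
  ext g
  constructor
  · rintro ⟨h, hX, rfl⟩
    exact ⟨hX, Lp.memLp h⟩
  · rintro ⟨hX, hg⟩
    refine ⟨hg.toLp g, ?_, AEEqFun.ext hg.coeFn_toLp⟩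
    show ∀ᵐ ω ∂μ, hg.toLp g ω ∈ X ω
    filter_upwards [hg.coeFn_toLp, hX] with ω hω hgω
    rwa [hω]

variable [Fact (1 ≤ p)]

theorem cl0_closure_subset (S : Set (Lp E p μ)) : cl0 μ (closure S) ⊆ cl0 μ S := by
  rintro g ⟨G, hGS, hGg⟩
  choose v hvS hv using fun n => Metric.mem_closure_iff.1 (hGS n) (1 / ((n : ℝ) + 1))
    (by positivity)
  refine ⟨v, hvS, hGg.of_tendstoInMeasure_sub_zero ?_⟩
  have hvG : Tendsto (fun n => v n - G n) atTop (𝓝 0) := by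
    rw [tendsto_zero_iff_norm_tendsto_zero]
    refine squeeze_zero (fun _ => norm_nonneg _) (fun n => ?_)
      tendsto_one_div_add_atTop_nhds_zero_nat
    rw [← dist_eq_norm, dist_comm]
    exact (hv n).le
  exact (tendstoInMeasure_of_tendsto_Lp hvG).congr (fun n => Lp.coeFn_sub _ _)
    (Lp.coeFn_zero E p μ)

theorem cl0_eq_Sel0_of_closure_eq_SelLp [IsFiniteMeasure μ] {S : Set (Lp E p μ)}
    (hS : S.Nonempty) {X : Ω → Set E} (hXcl : ∀ᵐ ω ∂μ, IsClosed (X ω))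
    (hX : closure S = SelLp μ p X) : cl0 μ S = Sel0 μ X := by
  refine (cl0_subset_Sel0 (hX ▸ subset_closure) hXcl).antisymm ?_
  calc Sel0 μ X ⊆ cl0 μ (SelLp μ p X) := Sel0_subset_cl0_SelLp (hX ▸ hS.closure)
    _ = cl0 μ (closure S) := by rw [hX]
    _ ⊆ cl0 μ S := cl0_closure_subset S

end

theorem cl0_decHull_eq_Sel0_general
    {Ω : Type*} {mΩ : MeasurableSpace Ω} {μ : Measure Ω} [IsProbabilityMeasure μ]
    {E : Type*} [NormedAddCommGroup E]
    {p : ℝ≥0∞} [Fact (1 ≤ p)]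
    (A : Set (Lp E p μ)) (hA : A.Nonempty)
    (X : Ω → Set E) (hXcl : ∀ᵐ ω ∂μ, IsClosed (X ω))
    (hX : closure (decHull A) = SelLp μ p X) :
    cl0 μ (decHull A) = Sel0 μ X ∧
    (fun h : Lp E p μ => (h : Ω →ₘ[μ] E)) '' closure (decHull A) =
      cl0 μ (decHull A) ∩ {g : Ω →ₘ[μ] E | MemLp (⇑g) p μ} := by
  have hcl0 : cl0 μ (decHull A) = Sel0 μ X :=
    cl0_eq_Sel0_of_closure_eq_SelLp (hA.mono (subset_decHull A)) hXcl hX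
  exact ⟨hcl0, by rw [hX, coe_image_SelLp, hcl0]⟩

/-- If `cl_p (dec A) = L^p(X)` for a closed random set `X` and nonempty `A ⊆ L^p(Ω;E)`,
then `cl_0 (dec A) = L^0(X)`; consequently `chd_p A = chd_0 A ∩ L^p(Ω;E)`. -/
theorem cl0_decHull_eq_Sel0
    {Ω : Type*} {mΩ : MeasurableSpace Ω} {μ : Measure Ω} [IsProbabilityMeasure μ]
    (hμ : μ.IsComplete) {E : Type*} [NormedAddCommGroup E] [NormedSpace ℝ E]
    [CompleteSpace E] [SecondCountableTopology E]
    {p : ℝ≥0∞} [Fact (1 ≤ p)] (hp' : p ≠ ⊤)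
    (A : Set (Lp E p μ)) (hA : A.Nonempty)
    (X : Ω → Set E) (hXcl : ∀ᵐ ω ∂μ, IsClosed (X ω))
    (hX : closure (decHull A) = SelLp μ p X) :
    cl0 μ (decHull A) = Sel0 μ X ∧
    (fun h : Lp E p μ => (h : Ω →ₘ[μ] E)) '' closure (decHull A) =
      cl0 μ (decHull A) ∩ {g : Ω →ₘ[μ] E | MemLp (⇑g) p μ} :=
  cl0_decHull_eq_Sel0_general (mΩ := mΩ) A hA X hXcl hX
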